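/- Let φ : ℝⁿ → ℝ ∪ {+∞} be an even convex function with 0 < ∫ e^{-φ} < +∞, and for m ≥ 1 define φ_m(x) = |x|²/(2m) + inf_z (φ(z) + (m/2)|x−z|²). Then dom(φ_m) = dom(Lφ_m) = ℝⁿ, φ_m and Lφ_m are differentiable and strictly convex on ℝⁿ, and ∇φ_m is a bijection of ℝⁿ. -/

import Mathlib

open MeasureTheory
noncomputable section

abbrev En (n : ℕ) := EuclideanSpace ℝ (Fin n)

/-- `e^{-a}` for `a ∈ ℝ ∪ {+∞}`, with `e^{-∞} = 0`. -/
def expNeg (a : EReal) : ℝ := if a = ⊤ then 0 else Real.exp (-a.toReal)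

/-- The Legendre transform of an `(ℝ ∪ {+∞})`-valued function on `ℝⁿ`. -/
def legT {n : ℕ} (φ : En n → EReal) (y : En n) : EReal :=
  ⨆ x : En n, (((inner ℝ x y : ℝ) : EReal) - φ x)

/-- Convexity for `(ℝ ∪ {+∞})`-valued functions. -/
def ConvexE {n : ℕ} (φ : En n → EReal) : Prop :=
  ∀ x y : En n, ∀ a b : ℝ, 0 ≤ a → 0 ≤ b → a + b = 1 →
    φ (a • x + b • y) ≤ (a : EReal) * φ x + (b : EReal) * φ y

/-- The regularization `φ_m(x) = |x|²/(2m) + inf_z (φ(z) + (m/2)|x−z|²)`. -/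
def phim {n : ℕ} (φ : En n → EReal) (m : ℕ) (x : En n) : EReal :=
  ((‖x‖ ^ 2 / (2 * m) : ℝ) : EReal) +
    ⨅ z : En n, (φ z + (((m : ℝ) / 2 * ‖x - z‖ ^ 2 : ℝ) : EReal))

/-!
Since `φ` is even and convex, `φ 0 ≤ φ`, and `φ 0 < ⊤` because `e^{-φ}` has positive integral.
So the Moreau envelope `E = inf_z (φ z + (m/2)|· - z|²)` is a finite convex function, hence
continuous. The semigroup identity `E u = inf_w (E₂ w + m |u - w|²)`, where `E₂` is the envelope
with parameter `2m`, has an attained infimum since `E₂` is continuous; a minimizer `w` gives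
`E (u + h) ≤ E u + ⟪2m (u - w), h⟫ + m |h|²`. A convex function with such a quadratic upper bound
at every point is differentiable, so `φ_m = |·|²/(2m) + E` is differentiable, `1/m`-strongly
convex and `(1/(2m) + m)`-smooth. Duality then finishes: the supremum defining `Lφ_m y` is
attained at a point where `∇φ_m = y`, strong convexity makes `∇φ_m` injective, and `Lφ_m` is
smooth (hence differentiable) and strongly convex because `φ_m` is strongly convex and smooth.
-/

open Set Filter Topology Asymptotics
open scoped RealInnerProductSpace

theorem Continuous.exists_forall_le_of_sq_norm_le {F : Type*} [NormedAddCommGroup F]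
    [ProperSpace F] {g : F → ℝ} (hg : Continuous g) {a c : ℝ} (hc : 0 < c) (x₀ : F)
    (hgrowth : ∀ x, a + c * ‖x - x₀‖ ^ 2 ≤ g x) : ∃ x, ∀ y, g x ≤ g y := by
  refine hg.exists_forall_le' x₀ ?_
  filter_upwards [(isCompact_closedBall x₀ (|g x₀ - a| / c + 1)).compl_mem_cocompact] with x hx
  have hR : |g x₀ - a| / c + 1 < ‖x - x₀‖ := by simpa [dist_eq_norm] using hx
  have h1 : 1 ≤ ‖x - x₀‖ := by
    have := div_nonneg (abs_nonneg (g x₀ - a)) hc.le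
    linarith
  have hR' : g x₀ - a < c * ‖x - x₀‖ := by
    have := le_abs_self (g x₀ - a)
    rw [div_add_one hc.ne', div_lt_iff₀ hc] at hR
    linarith
  nlinarith [hgrowth x, mul_nonneg (mul_nonneg hc.le (norm_nonneg (x - x₀))) (sub_nonneg.2 h1)]

section ConvexAnalysis

variable {F : Type*} [NormedAddCommGroup F] [InnerProductSpace ℝ F]
  {f : F → ℝ} {c A : ℝ} {u p x y : F}

theorem strongConvexOn_univ_of_forall_le {L : F → ℝ}
    (h : ∀ y, ∃ p, ∀ y', L y + ⟪p, y' - y⟫ + c / 2 * ‖y' - y‖ ^ 2 ≤ L y') :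
    StrongConvexOn univ c L := by
  refine ⟨convex_univ, fun y₁ _ y₂ _ a b ha hb hab => ?_⟩
  obtain rfl : b = 1 - a := by linarith
  obtain ⟨p, hp⟩ := h (a • y₁ + (1 - a) • y₂)
  have h₁ : y₁ - (a • y₁ + (1 - a) • y₂) = (1 - a) • (y₁ - y₂) := by module
  have h₂ : y₂ - (a • y₁ + (1 - a) • y₂) = (-a) • (y₁ - y₂) := by module
  have e₁ := hp y₁
  have e₂ := hp y₂
  rw [h₁, inner_smul_right, norm_smul, mul_pow, Real.norm_eq_abs, sq_abs] at e₁
  rw [h₂, inner_smul_right, norm_smul, mul_pow, Real.norm_eq_abs, sq_abs] at e₂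
  simp only [smul_eq_mul]
  nlinarith [mul_le_mul_of_nonneg_left e₁ ha, mul_le_mul_of_nonneg_left e₂ hb]

theorem strongConvexOn_conj_of_le_quadratic {xs : F → F} (hA : 0 < A)
    (hmax : ∀ y, IsMaxOn (fun x => ⟪x, y⟫ - f x) univ (xs y))
    (hsmooth : ∀ y h, f (xs y + h) ≤ f (xs y) + ⟪y, h⟫ + A * ‖h‖ ^ 2) :
    StrongConvexOn univ (2 * A)⁻¹ fun y => ⟪xs y, y⟫ - f (xs y) := by
  refine strongConvexOn_univ_of_forall_le fun y => ⟨xs y, fun y' => ?_⟩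
  set t := (2 * A)⁻¹
  set d := y' - y
  -- test the supremum at `y'` on `xs y + t • d`; `t = (2A)⁻¹` maximizes `t - A t²`
  have htest : ⟪xs y + t • d, y'⟫ - f (xs y + t • d) ≤ ⟪xs y', y'⟫ - f (xs y') :=
    isMaxOn_univ_iff.1 (hmax y') _
  have hup := hsmooth y (t • d)
  have hd : t * ⟪d, y'⟫ - t * ⟪y, d⟫ = t * ‖d‖ ^ 2 := by
    rw [real_inner_comm d y, ← mul_sub, ← inner_sub_right, real_inner_self_eq_norm_sq]
  have hy' : ⟪xs y, y'⟫ = ⟪xs y, y⟫ + ⟪xs y, d⟫ := by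
    rw [← inner_add_right, add_sub_cancel]
  have ht : A * (t ^ 2 * ‖d‖ ^ 2) = t / 2 * ‖d‖ ^ 2 := by
    simp only [t]
    field_simp
  rw [inner_add_left, real_inner_smul_left] at htest
  rw [real_inner_smul_right, norm_smul, mul_pow, Real.norm_eq_abs, sq_abs] at hup
  linarith

theorem ConvexOn.strongConvexOn_sq_norm_div_add {s : Set F} {E : F → ℝ} (hE : ConvexOn ℝ s E)
    (a : ℝ) : StrongConvexOn s a⁻¹ fun x => ‖x‖ ^ 2 / (2 * a) + E x := by
  rw [strongConvexOn_iff_convex]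
  convert hE using 1
  funext x
  ring

theorem sq_norm_div_add_le_quadratic {E : F → ℝ} {a C : ℝ}
    (hE : ∀ h, E (u + h) ≤ E u + ⟪p, h⟫ + C * ‖h‖ ^ 2) (h : F) :
    ‖u + h‖ ^ 2 / (2 * a) + E (u + h)
      ≤ ‖u‖ ^ 2 / (2 * a) + E u + ⟪a⁻¹ • u + p, h⟫ + ((2 * a)⁻¹ + C) * ‖h‖ ^ 2 := by
  rw [norm_add_sq_real, inner_add_left, real_inner_smul_left]
  linear_combination hE h

variable [CompleteSpace F]

theorem ConvexOn.hasGradientAt_of_le_quadratic (hf : ConvexOn ℝ univ f) {C : ℝ}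
    (hub : ∀ h, f (u + h) ≤ f u + ⟪p, h⟫ + C * ‖h‖ ^ 2) : HasGradientAt f p u := by
  -- convexity at the midpoint of `u ± h` turns the upper bound at `-h` into a lower bound at `h`
  have hlb : ∀ h, f u + ⟪p, h⟫ - C * ‖h‖ ^ 2 ≤ f (u + h) := fun h => by
    have hmid := hf.2 (mem_univ (u + h)) (mem_univ (u - h)) one_half_pos.le one_half_pos.le
      (add_halves 1)
    have hmid' : (1 / 2 : ℝ) • (u + h) + (1 / 2 : ℝ) • (u - h) = u := by module
    have := hub (-h)
    rw [hmid', smul_eq_mul, smul_eq_mul] at hmid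
    rw [inner_neg_right, norm_neg, ← sub_eq_add_neg] at this
    linarith
  have hbound : ∀ h, ‖f (u + h) - f u - ⟪p, h⟫‖ ≤ |C| * ‖‖h‖ ^ 2‖ := fun h => by
    rw [Real.norm_eq_abs, norm_pow, norm_norm, abs_le]
    have := le_abs_self C
    have := neg_abs_le C
    constructor <;> nlinarith [hub h, hlb h, sq_nonneg ‖h‖]
  rw [hasGradientAt_iff_isLittleO_nhds_zero]
  exact (isBigO_of_le' _ hbound).trans_isLittleO (isLittleO_norm_pow_id one_lt_two)

theorem ConvexOn.add_inner_le_of_hasGradientAt (hf : ConvexOn ℝ univ f)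
    (hg : HasGradientAt f p x) (y : F) : f x + ⟪p, y - x⟫ ≤ f y := by
  have hline : HasDerivAt (f ∘ AffineMap.lineMap (k := ℝ) x y) ⟪p, y - x⟫ 0 := by
    have hg' : HasFDerivAt f (InnerProductSpace.toDual ℝ F p)
        (AffineMap.lineMap (k := ℝ) x y 0) := by
      simpa using hg.hasFDerivAt
    simpa using hg'.comp_hasDerivAt (0 : ℝ) AffineMap.hasDerivAt_lineMap
  have := (hf.comp_affineMap (AffineMap.lineMap (k := ℝ) x y)).le_slope_of_hasDerivAt
    (mem_univ 0) (mem_univ 1) one_pos hline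
  simp only [slope_def_field, Function.comp_apply, AffineMap.lineMap_apply_one,
    AffineMap.lineMap_apply_zero, sub_zero, div_one] at this
  linarith

theorem StrongConvexOn.add_inner_add_le_of_hasGradientAt (hf : StrongConvexOn univ c f)
    (hg : HasGradientAt f p x) (y : F) : f x + ⟪p, y - x⟫ + c / 2 * ‖y - x‖ ^ 2 ≤ f y := by
  have hq : HasGradientAt (fun x => c / 2 * ‖x‖ ^ 2) (c • x) x := by
    have hder : (c / 2) • (2 • innerSL ℝ x) = InnerProductSpace.toDual ℝ F (c • x) := by
      ext h
      simp only [smul_apply, coe_innerSL_apply, nsmul_eq_mul, Nat.cast_ofNat,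
        smul_eq_mul, map_smul, InnerProductSpace.toDual_apply_apply]
      ring
    rw [hasGradientAt_iff_hasFDerivAt, ← hder]
    exact (hasStrictFDerivAt_norm_sq x).hasFDerivAt.const_mul (c / 2)
  have hsub : HasGradientAt (fun x => f x - c / 2 * ‖x‖ ^ 2) (p - c • x) x := by
    rw [hasGradientAt_iff_hasFDerivAt, map_sub]
    exact hg.hasFDerivAt.sub hq.hasFDerivAt
  have := (strongConvexOn_iff_convex.1 hf).add_inner_le_of_hasGradientAt hsub y
  rw [inner_sub_left, real_inner_smul_left] at this
  have hexp : ‖y‖ ^ 2 = ‖x‖ ^ 2 + 2 * ⟪x, y - x⟫ + ‖y - x‖ ^ 2 := by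
    rw [← norm_add_sq_real, add_sub_cancel]
  linear_combination this - c / 2 * hexp

theorem StrongConvexOn.injective_gradient (hf : StrongConvexOn univ c f) (hc : 0 < c)
    (hd : Differentiable ℝ f) : Function.Injective (gradient f) := by
  intro x₁ x₂ hx
  have h₁ := hf.add_inner_add_le_of_hasGradientAt (hd x₁).hasGradientAt x₂
  have h₂ := hf.add_inner_add_le_of_hasGradientAt (hd x₂).hasGradientAt x₁
  rw [← hx, ← neg_sub x₂, inner_neg_right, norm_neg] at h₂
  have : ‖x₂ - x₁‖ ^ 2 ≤ 0 := by nlinarith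
  simpa [sub_eq_zero, eq_comm] using this

theorem IsMaxOn.hasGradientAt (hmax : IsMaxOn (fun x => ⟪x, y⟫ - f x) univ x)
    (hd : DifferentiableAt ℝ f x) : HasGradientAt f y x := by
  have hinner : HasFDerivAt (fun x => ⟪x, y⟫) (InnerProductSpace.toDual ℝ F y) x := by
    convert (InnerProductSpace.toDual ℝ F y).hasFDerivAt using 1
    ext z
    simp [real_inner_comm]
  have h0 : InnerProductSpace.toDual ℝ F (y - gradient f x) = 0 := by
    rw [map_sub]
    exact (hmax.isLocalMax univ_mem).hasFDerivAt_eq_zero (hinner.sub hd.hasGradientAt.hasFDerivAt)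
  rw [sub_eq_zero.1 ((InnerProductSpace.toDual ℝ F).map_eq_zero_iff.1 h0)]
  exact hd.hasGradientAt

theorem StrongConvexOn.exists_isMaxOn_inner_sub [ProperSpace F] (hf : StrongConvexOn univ c f)
    (hc : 0 < c) (hd : Differentiable ℝ f) (y : F) :
    ∃ x, IsMaxOn (fun x => ⟪x, y⟫ - f x) univ x := by
  set q := gradient f 0 - y
  have hgrowth : ∀ x, f 0 - ‖q‖ ^ 2 / c + c / 4 * ‖x - 0‖ ^ 2 ≤ f x - ⟪x, y⟫ := fun x => by
    have hsupp := hf.add_inner_add_le_of_hasGradientAt (hd 0).hasGradientAt x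
    have hcs : -(‖q‖ * ‖x‖) ≤ ⟪q, x⟫ := neg_le_of_abs_le (abs_real_inner_le_norm q x)
    have hamgm : ‖q‖ * ‖x‖ ≤ ‖q‖ ^ 2 / c + c / 4 * ‖x‖ ^ 2 := by
      rw [div_add' _ _ _ hc.ne', le_div_iff₀ hc]
      nlinarith [sq_nonneg (c / 2 * ‖x‖ - ‖q‖)]
    rw [inner_sub_left, real_inner_comm x y] at hcs
    rw [sub_zero] at hsupp ⊢
    linarith
  have hcont : Continuous fun x => f x - ⟪x, y⟫ :=
    hd.continuous.sub (continuous_id.inner continuous_const)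
  obtain ⟨x, hx⟩ := hcont.exists_forall_le_of_sq_norm_le (by positivity : 0 < c / 4) 0 hgrowth
  exact ⟨x, isMaxOn_univ_iff.2 fun z => by linarith [hx z]⟩

theorem conj_le_quadratic_of_strongConvexOn {xs : F → F} (hf : StrongConvexOn univ c f)
    (hc : 0 < c) (hg : ∀ y, HasGradientAt f y (xs y)) (y h : F) :
    ⟪xs (y + h), y + h⟫ - f (xs (y + h))
      ≤ ⟪xs y, y⟫ - f (xs y) + ⟪xs y, h⟫ + (2 * c)⁻¹ * ‖h‖ ^ 2 := by
  have hsupp := hf.add_inner_add_le_of_hasGradientAt (hg y) (xs (y + h))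
  have hcs := real_inner_le_norm (xs (y + h) - xs y) h
  have hamgm : ‖xs (y + h) - xs y‖ * ‖h‖
      ≤ c / 2 * ‖xs (y + h) - xs y‖ ^ 2 + (2 * c)⁻¹ * ‖h‖ ^ 2 := by
    rw [← sub_nonneg]
    have : c / 2 * ‖xs (y + h) - xs y‖ ^ 2 + (2 * c)⁻¹ * ‖h‖ ^ 2 - ‖xs (y + h) - xs y‖ * ‖h‖
        = (2 * c)⁻¹ * (c * ‖xs (y + h) - xs y‖ - ‖h‖) ^ 2 := by
      field_simp
      ring
    rw [this]
    positivity
  rw [inner_add_right]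
  rw [inner_sub_right, real_inner_comm (xs (y + h)) y, real_inner_comm (xs y) y] at hsupp
  rw [inner_sub_left] at hcs
  linarith

theorem ConvexOn.differentiable_of_le_quadratic (hf : ConvexOn ℝ univ f) {C : ℝ}
    (hub : ∀ u, ∃ p, ∀ h, f (u + h) ≤ f u + ⟪p, h⟫ + C * ‖h‖ ^ 2) : Differentiable ℝ f :=
  fun u => (hf.hasGradientAt_of_le_quadratic (hub u).choose_spec).differentiableAt

theorem StrongConvexOn.bijective_gradient [ProperSpace F] (hf : StrongConvexOn univ c f)
    (hc : 0 < c) (hd : Differentiable ℝ f) : Function.Bijective (gradient f) := by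
  refine ⟨hf.injective_gradient hc hd, fun y => ?_⟩
  obtain ⟨x, hx⟩ := hf.exists_isMaxOn_inner_sub hc hd y
  exact ⟨x, (hx.hasGradientAt (hd x)).gradient⟩

theorem StrongConvexOn.differentiable_and_strictConvexOn_conj (hf : StrongConvexOn univ c f)
    (hc : 0 < c) (hA : 0 < A) (hsmooth : ∀ u, ∃ p, ∀ h, f (u + h) ≤ f u + ⟪p, h⟫ + A * ‖h‖ ^ 2)
    {xs : F → F} (hmax : ∀ y, IsMaxOn (fun x => ⟪x, y⟫ - f x) univ (xs y)) :
    Differentiable ℝ (fun y => ⟪xs y, y⟫ - f (xs y)) ∧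
      StrictConvexOn ℝ univ (fun y => ⟪xs y, y⟫ - f (xs y)) := by
  have hfconv : ConvexOn ℝ univ f := strongConvexOn_zero.1 (hf.mono hc.le)
  have hd := hfconv.differentiable_of_le_quadratic hsmooth
  have hgrad y : HasGradientAt f y (xs y) := (hmax y).hasGradientAt (hd (xs y))
  have hsmooth' y : ∀ h, f (xs y + h) ≤ f (xs y) + ⟪y, h⟫ + A * ‖h‖ ^ 2 := by
    obtain ⟨p, hp⟩ := hsmooth (xs y)
    rwa [(hfconv.hasGradientAt_of_le_quadratic hp).unique (hgrad y)] at hp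
  have hconj := strongConvexOn_conj_of_le_quadratic hA hmax hsmooth'
  refine ⟨fun y => ?_, hconj.strictConvexOn (by positivity)⟩
  exact ((strongConvexOn_zero.1 (hconj.mono (by positivity))).hasGradientAt_of_le_quadratic
    (conj_le_quadratic_of_strongConvexOn hf hc hgrad y)).differentiableAt

end ConvexAnalysis

section MoreauEnvelope

variable {F : Type*} [NormedAddCommGroup F] {φ : F → EReal} {B c : ℝ} {z₀ : F}

def moreauEnv (φ : F → EReal) (c : ℝ) (u : F) : EReal :=
  ⨅ z, (φ z + ((c / 2 * ‖u - z‖ ^ 2 : ℝ) : EReal))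

def moreauEnvR (φ : F → EReal) (c : ℝ) (u : F) : ℝ := (moreauEnv φ c u).toReal

theorem coe_moreauEnvR (hB : ∀ x, (B : EReal) ≤ φ x) (hz₀ : φ z₀ ≠ ⊤) (hc : 0 ≤ c) (u : F) :
    (moreauEnvR φ c u : EReal) = moreauEnv φ c u := by
  have hbot : moreauEnv φ c u ≠ ⊥ := ne_bot_of_le_ne_bot (EReal.coe_ne_bot B) <|
    le_iInf fun z => (hB z).trans (le_add_of_nonneg_right (EReal.coe_nonneg.2 (by positivity)))
  have htop : moreauEnv φ c u ≠ ⊤ := by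
    refine ne_top_of_le_ne_top ?_ (iInf_le _ z₀)
    rw [← EReal.coe_toReal hz₀ (ne_bot_of_le_ne_bot (EReal.coe_ne_bot B) (hB z₀)),
      ← EReal.coe_add]
    exact EReal.coe_ne_top _
  exact EReal.coe_toReal htop hbot

theorem moreauEnvR_le (hB : ∀ x, (B : EReal) ≤ φ x) (hz₀ : φ z₀ ≠ ⊤) (hc : 0 ≤ c) (u : F)
    {z : F} (hz : φ z ≠ ⊤) : moreauEnvR φ c u ≤ (φ z).toReal + c / 2 * ‖u - z‖ ^ 2 := by
  rw [← EReal.coe_le_coe_iff, coe_moreauEnvR hB hz₀ hc, EReal.coe_add,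
    EReal.coe_toReal hz (ne_bot_of_le_ne_bot (EReal.coe_ne_bot B) (hB z))]
  exact iInf_le _ z

theorem le_moreauEnvR (hB : ∀ x, (B : EReal) ≤ φ x) (hz₀ : φ z₀ ≠ ⊤) (hc : 0 ≤ c) {u : F} {r : ℝ}
    (h : ∀ z, φ z ≠ ⊤ → r ≤ (φ z).toReal + c / 2 * ‖u - z‖ ^ 2) : r ≤ moreauEnvR φ c u := by
  rw [← EReal.coe_le_coe_iff, coe_moreauEnvR hB hz₀ hc]
  refine le_iInf fun z => ?_
  by_cases hz : φ z = ⊤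
  · rw [hz, EReal.top_add_of_ne_bot (EReal.coe_ne_bot _)]
    exact le_top
  · rw [← EReal.coe_toReal hz (ne_bot_of_le_ne_bot (EReal.coe_ne_bot B) (hB z)), ← EReal.coe_add,
      EReal.coe_le_coe_iff]
    exact h z hz

theorem le_moreauEnvR_of_forall_le (hB : ∀ x, (B : EReal) ≤ φ x) (hz₀ : φ z₀ ≠ ⊤) (hc : 0 ≤ c)
    (u : F) : B ≤ moreauEnvR φ c u :=
  le_moreauEnvR hB hz₀ hc fun z hz => by
    have : B ≤ (φ z).toReal := by
      rw [← EReal.coe_le_coe_iff,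
        EReal.coe_toReal hz (ne_bot_of_le_ne_bot (EReal.coe_ne_bot B) (hB z))]
      exact hB z
    nlinarith [sq_nonneg ‖u - z‖]

theorem exists_lt_moreauEnvR_add (hB : ∀ x, (B : EReal) ≤ φ x) (hz₀ : φ z₀ ≠ ⊤) (hc : 0 ≤ c)
    (u : F) {ε : ℝ} (hε : 0 < ε) :
    ∃ z, φ z ≠ ⊤ ∧ (φ z).toReal + c / 2 * ‖u - z‖ ^ 2 < moreauEnvR φ c u + ε := by
  by_contra! h
  linarith [le_moreauEnvR hB hz₀ hc h]

theorem moreauEnvR_le_two_mul (hB : ∀ x, (B : EReal) ≤ φ x) (hz₀ : φ z₀ ≠ ⊤) (hc : 0 ≤ c)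
    (u w : F) : moreauEnvR φ c u ≤ moreauEnvR φ (2 * c) w + c * ‖u - w‖ ^ 2 := by
  have := le_moreauEnvR hB hz₀ (by positivity : 0 ≤ 2 * c) (u := w)
    (r := moreauEnvR φ c u - c * ‖u - w‖ ^ 2) fun z hz => by
      have hle := moreauEnvR_le hB hz₀ hc u hz
      have htri := norm_sub_le_norm_sub_add_norm_sub u w z
      have hsq : ‖u - z‖ ^ 2 ≤ 2 * ‖u - w‖ ^ 2 + 2 * ‖w - z‖ ^ 2 := by
        nlinarith [sq_nonneg (‖u - w‖ - ‖w - z‖), norm_nonneg (u - z)]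
      nlinarith
  linarith

end MoreauEnvelope

section MoreauEnvelopeEuclidean

variable {n : ℕ} {φ : En n → EReal} {B c : ℝ} {z₀ : En n}

theorem ConvexE.toReal_le (hconv : ConvexE φ) (hbot : ∀ x, φ x ≠ ⊥) {x y : En n}
    (hx : φ x ≠ ⊤) (hy : φ y ≠ ⊤) {a b : ℝ} (ha : 0 ≤ a) (hb : 0 ≤ b) (hab : a + b = 1) :
    φ (a • x + b • y) ≠ ⊤ ∧ (φ (a • x + b • y)).toReal ≤ a * (φ x).toReal + b * (φ y).toReal := by
  have h := hconv x y a b ha hb hab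
  rw [← EReal.coe_toReal hx (hbot x), ← EReal.coe_toReal hy (hbot y), ← EReal.coe_mul,
    ← EReal.coe_mul, ← EReal.coe_add] at h
  have hne := ne_top_of_le_ne_top (EReal.coe_ne_top _) h
  refine ⟨hne, ?_⟩
  rwa [← EReal.coe_le_coe_iff, EReal.coe_toReal hne (hbot _)]

theorem convexOn_moreauEnvR (hconv : ConvexE φ) (hB : ∀ x, (B : EReal) ≤ φ x) (hz₀ : φ z₀ ≠ ⊤)
    (hc : 0 ≤ c) : ConvexOn ℝ univ (moreauEnvR φ c) := by
  have hbot x : φ x ≠ ⊥ := ne_bot_of_le_ne_bot (EReal.coe_ne_bot B) (hB x)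
  refine ⟨convex_univ, fun x _ y _ a b ha hb hab => le_of_forall_pos_le_add fun ε hε => ?_⟩
  obtain ⟨z₁, hz₁, h₁⟩ := exists_lt_moreauEnvR_add hB hz₀ hc x hε
  obtain ⟨z₂, hz₂, h₂⟩ := exists_lt_moreauEnvR_add hB hz₀ hc y hε
  obtain ⟨hz, hφ⟩ := hconv.toReal_le hbot hz₁ hz₂ ha hb hab
  have hsq : ‖(a • x + b • y) - (a • z₁ + b • z₂)‖ ^ 2 ≤ a * ‖x - z₁‖ ^ 2 + b * ‖y - z₂‖ ^ 2 := by
    rw [show (a • x + b • y) - (a • z₁ + b • z₂) = a • (x - z₁) + b • (y - z₂) by module]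
    exact (convexOn_univ_norm.pow (fun _ _ => norm_nonneg _) 2).2 trivial trivial ha hb hab
  have hle := moreauEnvR_le hB hz₀ hc (a • x + b • y) hz
  simp only [smul_eq_mul]
  nlinarith [mul_le_mul_of_nonneg_left h₁.le ha, mul_le_mul_of_nonneg_left h₂.le hb,
    mul_le_mul_of_nonneg_left hsq (by positivity : 0 ≤ c / 2)]

theorem continuous_moreauEnvR (hconv : ConvexE φ) (hB : ∀ x, (B : EReal) ≤ φ x)
    (hz₀ : φ z₀ ≠ ⊤) (hc : 0 ≤ c) : Continuous (moreauEnvR φ c) :=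
  continuousOn_univ.1 ((convexOn_moreauEnvR hconv hB hz₀ hc).continuousOn isOpen_univ)

/-- Semigroup property of the envelope, with the outer infimum attained: this provides the exact
minimizer that `φ`, which need not be lower semicontinuous, does not. -/
theorem exists_moreauEnvR_eq_two_mul (hconv : ConvexE φ) (hB : ∀ x, (B : EReal) ≤ φ x)
    (hz₀ : φ z₀ ≠ ⊤) (hc : 0 < c) (u : En n) :
    ∃ w, moreauEnvR φ c u = moreauEnvR φ (2 * c) w + c * ‖u - w‖ ^ 2 := by
  have hcont : Continuous fun w => moreauEnvR φ (2 * c) w + c * ‖u - w‖ ^ 2 :=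
    (continuous_moreauEnvR hconv hB hz₀ (by positivity)).add
      (continuous_const.mul ((continuous_const.sub continuous_id).norm.pow 2))
  obtain ⟨w, hw⟩ := hcont.exists_forall_le_of_sq_norm_le (a := B) hc u fun w => by
    rw [norm_sub_rev]
    linarith [le_moreauEnvR_of_forall_le hB hz₀ (by positivity : 0 ≤ 2 * c) w]
  refine ⟨w, le_antisymm (moreauEnvR_le_two_mul hB hz₀ hc.le u w) ?_⟩
  refine le_moreauEnvR hB hz₀ hc.le fun z hz => ?_
  -- the midpoint `v` of `u` and `z` has `c ‖v - z‖² + c ‖u - v‖² = c / 2 * ‖u - z‖²`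
  have hmid := hw ((1 / 2 : ℝ) • (u + z))
  have hle := moreauEnvR_le hB hz₀ (by positivity : 0 ≤ 2 * c) ((1 / 2 : ℝ) • (u + z)) hz
  have h₁ : u - (1 / 2 : ℝ) • (u + z) = (1 / 2 : ℝ) • (u - z) := by module
  have h₂ : (1 / 2 : ℝ) • (u + z) - z = (1 / 2 : ℝ) • (u - z) := by module
  have hq : ‖(1 / 2 : ℝ) • (u - z)‖ ^ 2 = ‖u - z‖ ^ 2 / 4 := by
    rw [norm_smul, mul_pow, Real.norm_of_nonneg (by norm_num)]
    ring
  rw [h₁, hq] at hmid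
  rw [h₂, hq] at hle
  linarith

theorem moreauEnvR_add_le (hconv : ConvexE φ) (hB : ∀ x, (B : EReal) ≤ φ x) (hz₀ : φ z₀ ≠ ⊤)
    (hc : 0 < c) (u : En n) :
    ∃ p, ∀ h, moreauEnvR φ c (u + h) ≤ moreauEnvR φ c u + ⟪p, h⟫ + c * ‖h‖ ^ 2 := by
  obtain ⟨w, hw⟩ := exists_moreauEnvR_eq_two_mul hconv hB hz₀ hc u
  refine ⟨(2 * c) • (u - w), fun h => ?_⟩
  have := moreauEnvR_le_two_mul hB hz₀ hc.le (u + h) w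
  rw [show u + h - w = (u - w) + h by abel, norm_add_sq_real] at this
  rw [real_inner_smul_left]
  linarith

end MoreauEnvelopeEuclidean

theorem legT_coe_eq_of_isMaxOn {n : ℕ} {f : En n → ℝ} {x y : En n}
    (hmax : IsMaxOn (fun x => ⟪x, y⟫ - f x) univ x) :
    legT (fun x => (f x : EReal)) y = ((⟪x, y⟫ - f x : ℝ) : EReal) :=
  le_antisymm
    (iSup_le fun z => by
      rw [← EReal.coe_sub, EReal.coe_le_coe_iff]; exact isMaxOn_univ_iff.1 hmax z)
    (le_iSup_of_le x (by rw [EReal.coe_sub]))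

theorem phim_eq_coe {n : ℕ} {φ : En n → EReal} {B : ℝ} {z₀ : En n}
    (hB : ∀ x, (B : EReal) ≤ φ x) (hz₀ : φ z₀ ≠ ⊤) (m : ℕ) (x : En n) :
    phim φ m x = ((‖x‖ ^ 2 / (2 * m) + moreauEnvR φ m x : ℝ) : EReal) := by
  rw [EReal.coe_add, coe_moreauEnvR hB hz₀ m.cast_nonneg]
  rfl

theorem ConvexE.apply_zero_le {n : ℕ} {φ : En n → EReal} (hconv : ConvexE φ)
    (heven : ∀ x, φ (-x) = φ x) (x : En n) : φ 0 ≤ φ x := by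
  have h := hconv x (-x) (1 / 2) (1 / 2) (by norm_num) (by norm_num) (by norm_num)
  rwa [heven, ← EReal.right_distrib_of_nonneg (by norm_num) (by norm_num), ← EReal.coe_add,
    show (1 / 2 + 1 / 2 : ℝ) = 1 by norm_num, EReal.coe_one, one_mul,
    show (1 / 2 : ℝ) • x + (1 / 2 : ℝ) • -x = 0 by module] at h

theorem exists_ne_top_of_lintegral_pos {α : Type*} [MeasurableSpace α] {μ : Measure α}
    {φ : α → EReal} (hi : 0 < ∫⁻ x, ENNReal.ofReal (expNeg (φ x)) ∂μ) : ∃ z, φ z ≠ ⊤ := by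
  by_contra! h
  simp [h, expNeg] at hi

theorem stmt11 {n : ℕ} (φ : En n → EReal)
    (hbot : ∀ x, φ x ≠ ⊥) (heven : ∀ x, φ (-x) = φ x) (hconv : ConvexE φ)
    (hi : 0 < ∫⁻ x, ENNReal.ofReal (expNeg (φ x)) ∧
      ∫⁻ x, ENNReal.ofReal (expNeg (φ x)) < ⊤)
    (m : ℕ) (hm : 1 ≤ m) :
    (∀ x, phim φ m x ≠ ⊤ ∧ phim φ m x ≠ ⊥) ∧
    (∀ y, legT (phim φ m) y ≠ ⊤ ∧ legT (phim φ m) y ≠ ⊥) ∧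
    Differentiable ℝ (fun x => (phim φ m x).toReal) ∧
    StrictConvexOn ℝ Set.univ (fun x => (phim φ m x).toReal) ∧
    Differentiable ℝ (fun y => (legT (phim φ m) y).toReal) ∧
    StrictConvexOn ℝ Set.univ (fun y => (legT (phim φ m) y).toReal) ∧
    Function.Bijective (gradient (fun x => (phim φ m x).toReal)) := by
  have hm0 : (0 : ℝ) < m := by exact_mod_cast hm
  have hm0' : (0 : ℝ) < (m : ℝ)⁻¹ := inv_pos.2 hm0
  obtain ⟨z, hz⟩ := exists_ne_top_of_lintegral_pos hi.1
  have h0 : φ 0 ≠ ⊤ := ne_top_of_le_ne_top hz (hconv.apply_zero_le heven z)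
  have hB : ∀ x, (((φ 0).toReal : ℝ) : EReal) ≤ φ x := by
    simpa only [EReal.coe_toReal h0 (hbot 0)] using hconv.apply_zero_le heven
  set f : En n → ℝ := fun x => ‖x‖ ^ 2 / (2 * m) + moreauEnvR φ m x
  have hf : StrongConvexOn univ (m : ℝ)⁻¹ f :=
    (convexOn_moreauEnvR hconv hB h0 hm0.le).strongConvexOn_sq_norm_div_add m
  have hsmooth u : ∃ p, ∀ h, f (u + h) ≤ f u + ⟪p, h⟫ + ((2 * (m : ℝ))⁻¹ + m) * ‖h‖ ^ 2 := by
    obtain ⟨p, hp⟩ := moreauEnvR_add_le hconv hB h0 hm0 u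
    exact ⟨_, sq_norm_div_add_le_quadratic hp⟩
  have hdiff : Differentiable ℝ f :=
    (strongConvexOn_zero.1 (hf.mono hm0'.le)).differentiable_of_le_quadratic hsmooth
  choose xs hxs using hf.exists_isMaxOn_inner_sub hm0' hdiff
  have hlegT y := legT_coe_eq_of_isMaxOn (hxs y)
  obtain ⟨hLdiff, hLstrict⟩ :=
    hf.differentiable_and_strictConvexOn_conj hm0' (by positivity) hsmooth hxs
  have hphim : phim φ m = fun x => (f x : EReal) := funext (phim_eq_coe hB h0 m)
  simp only [hphim, EReal.toReal_coe, hlegT]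
  exact ⟨fun x => ⟨EReal.coe_ne_top _, EReal.coe_ne_bot _⟩,
    fun y => ⟨EReal.coe_ne_top _, EReal.coe_ne_bot _⟩, hdiff, hf.strictConvexOn hm0', hLdiff,
    hLstrict, hf.bijective_gradient hm0' hdiff⟩
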